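/- The function x ↦ (B(x) − A(x))/x^5 is strictly monotone increasing on the interval (0,1]. -/

import Mathlib

/-!
`B` has nonnegative coefficients `c n = O(1/n²)`, so it converges on `[0, 1]`. Split it after
the term of degree 13: the tail divided by `x⁵` is again a power series with nonnegative
coefficients, hence nondecreasing on `(0, 1]`. For the head `P`, the quotient `(P - A)/x⁵`
increases as soon as `5 (P - A) < x (P' - A')`. In the variable `s = √(4 - 3x) ∈ (1, 2)`, this
difference multiplied by `2s(10 + s)²` is a polynomial of degree 29 in `s`, and its coefficients
in the Bernstein basis `(s - 1)ⁱ (2 - s)²⁹⁻ⁱ` of `[1, 2]` are nonnegative, not all zero.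
-/

open Real

/-- The series `B(x) = ∑ ((1/(2n-1))·(1/4ⁿ)·C(2n,n))²·xⁿ`. -/
noncomputable def Bfun (x : ℝ) : ℝ :=
  ∑' n : ℕ, ((1 / (2 * (n : ℝ) - 1)) * (1 / 4 ^ n) * (Nat.choose (2 * n) n)) ^ 2 * x ^ n

/-- The function `A(x) = 1 + 3x/(10 + √(4 - 3x))`. -/
noncomputable def Afun (x : ℝ) : ℝ := 1 + 3 * x / (10 + Real.sqrt (4 - 3 * x))

open Finset Set

section PowerSeries

variable {a : ℕ → ℝ}

lemma summable_mul_pow_of_nonneg (ha : ∀ n, 0 ≤ a n) (hs : Summable a) (e : ℕ → ℕ) {x : ℝ}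
    (hx : x ∈ Icc (0 : ℝ) 1) : Summable fun n ↦ a n * x ^ e n :=
  Summable.of_nonneg_of_le (fun n ↦ mul_nonneg (ha n) (pow_nonneg hx.1 _))
    (fun n ↦ mul_le_of_le_one_right (ha n) (pow_le_one₀ hx.1 hx.2)) hs

lemma monotoneOn_tsum_mul_pow (ha : ∀ n, 0 ≤ a n) (hs : Summable a) (e : ℕ → ℕ) :
    MonotoneOn (fun x ↦ ∑' n, a n * x ^ e n) (Icc 0 1) := fun _ hx _ hy hxy ↦
  Summable.tsum_le_tsum (fun n ↦ mul_le_mul_of_nonneg_left (pow_le_pow_left₀ hx.1 hxy _) (ha n))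
    (summable_mul_pow_of_nonneg ha hs e hx) (summable_mul_pow_of_nonneg ha hs e hy)

lemma tsum_mul_pow_div_pow {x : ℝ} (hs : Summable fun n ↦ a n * x ^ n) (hx : x ≠ 0) {k N : ℕ}
    (hkN : k ≤ N) :
    (∑' n, a n * x ^ n) / x ^ k =
      (∑ n ∈ range N, a n * x ^ n) / x ^ k + ∑' n, a (n + N) * x ^ (n + (N - k)) := by
  obtain ⟨m, rfl⟩ := Nat.exists_eq_add_of_le hkN
  rw [← hs.sum_add_tsum_nat_add (k + m), add_div, ← tsum_div_const, Nat.add_sub_cancel_left]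
  congr 2 with n
  field_simp
  ring

lemma hasDerivAt_sum_range_mul_pow (c : ℕ → ℝ) (N : ℕ) (x : ℝ) :
    HasDerivAt (fun y ↦ ∑ n ∈ range N, c n * y ^ n) (∑ n ∈ range N, c n * (n * x ^ (n - 1))) x :=
  HasDerivAt.fun_sum fun n _ ↦ (hasDerivAt_pow n x).const_mul (c n)

end PowerSeries

lemma strictMonoOn_div_pow_of_lt_mul_deriv {f f' : ℝ → ℝ} {k : ℕ} {b : ℝ}
    (hf : ContinuousOn f (Ioc 0 b)) (hderiv : ∀ x ∈ Ioo 0 b, HasDerivAt f (f' x) x)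
    (hlt : ∀ x ∈ Ioo 0 b, k * f x < x * f' x) :
    StrictMonoOn (fun x ↦ f x / x ^ k) (Ioc 0 b) := by
  refine strictMonoOn_of_deriv_pos (convex_Ioc 0 b)
    (hf.div (continuousOn_pow k) fun x hx ↦ pow_ne_zero k hx.1.ne') fun x hx ↦ ?_
  rw [interior_Ioc] at hx
  have hx0 := hx.1
  rw [((hderiv x hx).fun_div (hasDerivAt_pow k x) (pow_ne_zero k hx0.ne')).deriv]
  refine div_pos ?_ (by positivity)
  have := hlt x hx
  cases k with
  | zero => simpa using (pos_iff_pos_of_mul_pos (by simpa using this)).mp hx0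
  | succ m =>
    have hnum : f' x * x ^ (m + 1) - f x * ((m + 1 : ℕ) * x ^ m) =
        x ^ m * (x * f' x - (m + 1 : ℕ) * f x) := by ring
    rw [Nat.add_sub_cancel, hnum]
    exact mul_pos (pow_pos hx0 m) (sub_pos.mpr this)

noncomputable def coeffB (n : ℕ) : ℝ :=
  ((1 / (2 * (n : ℝ) - 1)) * (1 / 4 ^ n) * (Nat.choose (2 * n) n)) ^ 2

lemma coeffB_nonneg (n : ℕ) : 0 ≤ coeffB n := sq_nonneg _

lemma coeffB_le (n : ℕ) : coeffB n ≤ 4 / ((n : ℝ) + 1) ^ 2 := by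
  have hchoose : (Nat.choose (2 * n) n : ℝ) ≤ 4 ^ n := by
    have := Nat.choose_le_two_pow (2 * n) n
    rw [pow_mul] at this
    exact_mod_cast this
  have hratio : ((1 / 4 ^ n : ℝ) * Nat.choose (2 * n) n) ^ 2 ≤ 1 := by
    rw [one_div_mul_eq_div]
    exact pow_le_one₀ (by positivity) ((div_le_one (by positivity)).mpr hchoose)
  have hodd : (1 / (2 * (n : ℝ) - 1)) ^ 2 ≤ 4 / ((n : ℝ) + 1) ^ 2 := by
    rcases Nat.eq_zero_or_pos n with rfl | hn
    · norm_num
    have hn : (1 : ℝ) ≤ n := by exact_mod_cast hn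
    rw [div_pow, one_pow, div_le_div_iff₀ (pow_pos (by linarith) 2) (by positivity)]
    nlinarith
  calc coeffB n = (1 / (2 * (n : ℝ) - 1)) ^ 2 * ((1 / 4 ^ n : ℝ) * Nat.choose (2 * n) n) ^ 2 := by
        rw [coeffB]; ring
    _ ≤ (1 / (2 * (n : ℝ) - 1)) ^ 2 * 1 := by gcongr
    _ ≤ 4 / ((n : ℝ) + 1) ^ 2 := by rwa [mul_one]

lemma summable_coeffB : Summable coeffB := by
  have h : Summable fun n : ℕ ↦ 4 / ((n : ℝ) + 1) ^ 2 := by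
    have := ((summable_nat_add_iff 1).mpr
      (Real.summable_one_div_nat_pow.mpr one_lt_two)).mul_left 4
    exact this.congr fun n ↦ by push_cast; ring
  exact Summable.of_nonneg_of_le coeffB_nonneg coeffB_le h

lemma continuous_Afun : Continuous Afun :=
  continuous_const.add <| (continuous_const.mul continuous_id).div
    (continuous_const.add (by fun_prop)) fun x ↦ by positivity

lemma hasDerivAt_Afun {x : ℝ} (hx : 3 * x < 4) :
    HasDerivAt Afun (3 / (10 + √(4 - 3 * x)) +
      9 * x / (2 * √(4 - 3 * x) * (10 + √(4 - 3 * x)) ^ 2)) x := by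
  have hs : 0 < √(4 - 3 * x) := Real.sqrt_pos.mpr (by linarith)
  have hlin : HasDerivAt (fun y : ℝ ↦ 3 * y) 3 x := by
    simpa using (hasDerivAt_id x).const_mul (3 : ℝ)
  have hden : HasDerivAt (fun y ↦ 10 + √(4 - 3 * y)) (-3 / (2 * √(4 - 3 * x))) x :=
    (((hlin.const_sub 4).sqrt (by linarith)).const_add 10).congr_deriv (by ring)
  exact ((hlin.fun_div hden (by positivity)).const_add 1).congr_deriv (by field_simp; ring)

-- The coefficients of index 24 to 29 of the expansion in `bernstein_expansion` vanish.
noncomputable def bernsteinCoeff : Fin 24 → ℝ :=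
  ![1919749655345 / 8796093022208, 8926223157773 / 1649267441664,
    553224598007307 / 8796093022208, 18078684690032939 / 39582418599936,
    51889633828833155 / 22265110462464, 198241938736300165 / 22265110462464,
    12289124870153923 / 463856467968, 2056272844149263 / 32614907904,
    3544325117426921 / 28991029248, 153271852636511075 / 782757789696,
    8293201144447002175 / 31701690482688, 1551079922355955117 / 5283615080448,
    826014952348782091 / 2972033482752, 5949059363115169609 / 26748301344768,
    251293747330060325 / 1671768834048, 2646085704824305 / 30958682112,
    13088722575787 / 322486272, 10260277457903 / 644972544, 45313024109 / 8957952,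
    5698722515 / 4478976, 68207585 / 279936, 19229 / 576, 1889 / 648, 79 / 648]

lemma bernsteinCoeff_pos (i : Fin 24) : 0 < bernsteinCoeff i := by
  fin_cases i <;> norm_num [bernsteinCoeff]

lemma bernstein_expansion {x s : ℝ} (hs : 0 < s) (hx : s ^ 2 = 4 - 3 * x) :
    2 * s * (10 + s) ^ 2 *
      (x * (∑ n ∈ range 14, coeffB n * (n * x ^ (n - 1)) -
          (3 / (10 + s) + 9 * x / (2 * s * (10 + s) ^ 2))) -
        5 * (∑ n ∈ range 14, coeffB n * x ^ n - (1 + 3 * x / (10 + s)))) =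
      ∑ i : Fin 24, bernsteinCoeff i * (s - 1) ^ (i : ℕ) * (2 - s) ^ (29 - (i : ℕ)) := by
  obtain rfl : x = (4 - s ^ 2) / 3 := by linarith
  simp only [sum_range_succ, sum_range_zero, coeffB, Fin.sum_univ_succ, Fin.sum_univ_zero,
    bernsteinCoeff, Matrix.cons_val_zero, Matrix.cons_val_succ]
  norm_num [Nat.choose_eq_factorial_div_factorial]
  field_simp
  ring

lemma five_mul_head_sub_Afun_lt {x : ℝ} (hx : x ∈ Ioo (0 : ℝ) 1) :
    5 * (∑ n ∈ range 14, coeffB n * x ^ n - Afun x) <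
      x * (∑ n ∈ range 14, coeffB n * (n * x ^ (n - 1)) -
        (3 / (10 + √(4 - 3 * x)) + 9 * x / (2 * √(4 - 3 * x) * (10 + √(4 - 3 * x)) ^ 2))) := by
  obtain ⟨hx0, hx1⟩ := hx
  set s := √(4 - 3 * x)
  have hs1 : 1 < s := (Real.lt_sqrt zero_le_one).mpr (by linarith)
  have hs2 : s < 2 := (Real.sqrt_lt' two_pos).mpr (by linarith)
  have hsq : s ^ 2 = 4 - 3 * x := Real.sq_sqrt (by linarith)
  have hcert : 0 < ∑ i : Fin 24, bernsteinCoeff i * (s - 1) ^ (i : ℕ) * (2 - s) ^ (29 - (i : ℕ)) :=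
    Finset.sum_pos (fun i _ ↦ mul_pos (mul_pos (bernsteinCoeff_pos i)
      (pow_pos (by linarith) _)) (pow_pos (by linarith) _)) univ_nonempty
  rw [← bernstein_expansion (by linarith) hsq] at hcert
  have := (pos_iff_pos_of_mul_pos hcert).mp (by positivity)
  rw [Afun]
  linarith

lemma strictMonoOn_head_sub_Afun_div_pow :
    StrictMonoOn (fun x ↦ (∑ n ∈ range 14, coeffB n * x ^ n - Afun x) / x ^ 5) (Ioc 0 1) :=
  strictMonoOn_div_pow_of_lt_mul_deriv
    ((continuous_finsetSum _ fun n _ ↦ by fun_prop).sub continuous_Afun).continuousOn (fun x hx ↦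
    (hasDerivAt_sum_range_mul_pow coeffB 14 x).sub (hasDerivAt_Afun (by linarith [hx.2])))
    fun x hx ↦ by exact_mod_cast five_mul_head_sub_Afun_lt hx

theorem theta_strictMonoOn :
    StrictMonoOn (fun x : ℝ => (Bfun x - Afun x) / x ^ 5) (Set.Ioc 0 1) := by
  have hsplit (x : ℝ) (hx : x ∈ Ioc (0 : ℝ) 1) : (Bfun x - Afun x) / x ^ 5 =
      (∑ n ∈ range 14, coeffB n * x ^ n - Afun x) / x ^ 5 +
        ∑' n, coeffB (n + 14) * x ^ (n + (14 - 5)) := by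
    have hs := summable_mul_pow_of_nonneg coeffB_nonneg summable_coeffB id (Ioc_subset_Icc_self hx)
    have hB : Bfun x = ∑' n, coeffB n * x ^ n := rfl
    rw [sub_div, sub_div, hB, tsum_mul_pow_div_pow (N := 14) hs hx.1.ne' (by norm_num)]
    ring
  have htail := monotoneOn_tsum_mul_pow (fun n ↦ coeffB_nonneg (n + 14))
    ((summable_nat_add_iff 14).mpr summable_coeffB) (· + (14 - 5))
  intro x hx y hy hxy
  simp only [hsplit x hx, hsplit y hy]
  exact add_lt_add_of_lt_of_le (strictMonoOn_head_sub_Afun_div_pow hx hy hxy)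
    (htail (Ioc_subset_Icc_self hx) (Ioc_subset_Icc_self hy) hxy.le)
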